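/- arXiv:math/9807140 — 4 statements merged into one kernel-verified Lean document; each statement's English description precedes it below -/
import Mathlib

section
/- Let n ≥ 1 and let k be a commutative ring. For index pairs with 1 ≤ u < v ≤ n+1, 1 ≤ i < j ≤ n+1, 1 ≤ a < b ≤ n+1, if e_{ab} > e_{ij} > e_{uv} in the given total order, then the iterated matrix commutator [[e_{uv}, e_{ab}], e_{ij}] equals 0 in the (n+1)×(n+1) matrices over k. -/
/-- The matrix unit `e_{ij}` in the `(n+1)×(n+1)` matrices over `k`
(indices are modeled 0-based, so `i : Fin (n+1)` corresponds to `1 ≤ i+1 ≤ n+1`). -/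
def E {n : ℕ} (k : Type*) [CommRing k] (i j : Fin (n + 1)) :
    Matrix (Fin (n + 1)) (Fin (n + 1)) k :=
  Matrix.single i j 1

/-- The total order on index pairs: `e_{ab} < e_{ij}` iff `a+b < i+j`, or
(`a+b = i+j` and `b < j`). -/
def pairLt {n : ℕ} (a b i j : Fin (n + 1)) : Prop :=
  a.val + b.val < i.val + j.val ∨ (a.val + b.val = i.val + j.val ∧ b.val < j.val)

/-
`[[e_uv, e_ab], e_ij]` expands into the four triple products of these matrix units, and a triple
product of matrix units vanishes unless its inner indices match. In each of the four products a
match, together with `u < v`, `i < j`, `a < b`, contradicts `e_ab > e_ij > e_uv`.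
-/

open Matrix

theorem Matrix.single_mul_single_mul_single_eq_zero {l m n o α : Type*} [Fintype m] [Fintype n]
    [DecidableEq l] [DecidableEq m] [DecidableEq n] [DecidableEq o] [NonUnitalNonAssocSemiring α]
    (i : l) (j j' : m) (p p' : n) (q : o) {x y z : α} (h : ¬(j = j' ∧ p = p')) :
    single i j x * single j' p y * single p' q z = 0 := by
  by_cases hj : j = j'
  · subst hj
    rw [single_mul_single_same, single_mul_single_of_ne (h := fun hp => h ⟨rfl, hp⟩)]
  · rw [single_mul_single_of_ne (h := hj), Matrix.zero_mul]

theorem stmt0_general {n : ℕ} (k : Type*) [CommRing k]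
    (u v i j a b : Fin (n + 1)) (huv : u < v) (hij : i < j) (hab : a < b)
    (h₁ : pairLt i j a b) (h₂ : pairLt u v i j) :
    (E k u v * E k a b - E k a b * E k u v) * E k i j
      - E k i j * (E k u v * E k a b - E k a b * E k u v) = 0 := by
  simp only [pairLt, Fin.lt_def] at *
  have hXYZ : E k u v * E k a b * E k i j = 0 :=
    single_mul_single_mul_single_eq_zero _ _ _ _ _ _ (by rintro ⟨rfl, rfl⟩; omega)
  have hYXZ : E k a b * E k u v * E k i j = 0 :=
    single_mul_single_mul_single_eq_zero _ _ _ _ _ _ (by rintro ⟨rfl, rfl⟩; omega)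
  have hZXY : E k i j * E k u v * E k a b = 0 :=
    single_mul_single_mul_single_eq_zero _ _ _ _ _ _ (by rintro ⟨rfl, rfl⟩; omega)
  have hZYX : E k i j * E k a b * E k u v = 0 :=
    single_mul_single_mul_single_eq_zero _ _ _ _ _ _ (by rintro ⟨rfl, rfl⟩; omega)
  rw [sub_mul, mul_sub, ← mul_assoc, ← mul_assoc, hXYZ, hYXZ, hZXY, hZYX, sub_zero, sub_zero]

/-- If `e_{ab} > e_{ij} > e_{uv}` then the iterated matrix commutator
`[[e_{uv}, e_{ab}], e_{ij}]` vanishes. -/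
theorem stmt0 {n : ℕ} (hn : 1 ≤ n) (k : Type*) [CommRing k]
    (u v i j a b : Fin (n + 1)) (huv : u < v) (hij : i < j) (hab : a < b)
    (h₁ : pairLt i j a b) (h₂ : pairLt u v i j) :
    (E k u v * E k a b - E k a b * E k u v) * E k i j
      - E k i j * (E k u v * E k a b - E k a b * E k u v) = 0 :=
  stmt0_general k u v i j a b huv hij hab h₁ h₂
end

section
/- For index pairs with 1 ≤ u < v ≤ n+1, 1 ≤ i < j ≤ n+1, 1 ≤ a < b ≤ n+1, if e_{ab} > e_{ij} > e_{uv} in the given total order, then the iterated q-bracket [[e_{uv}, e_{ab}]_q, e_{ij}]_q equals 0 in L = (sl_{n+1}^+)_q. -/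
open Finsupp TensorProduct

/-- Index pairs `1 ≤ i < j ≤ n+1`, modeled 0-based as pairs in `Fin (n+1)`. -/
abbrev Idx (n : ℕ) := {p : Fin (n + 1) × Fin (n + 1) // p.1 < p.2}

/-- The total order on index pairs: `e_{ab} < e_{ij}` iff `a+b < i+j`, or
(`a+b = i+j` and `b < j`). -/
def idxLt {n : ℕ} (x y : Idx n) : Prop :=
  x.1.1.val + x.1.2.val < y.1.1.val + y.1.2.val ∨
    (x.1.1.val + x.1.2.val = y.1.1.val + y.1.2.val ∧ x.1.2.val < y.1.2.val)

instance {n : ℕ} : DecidableRel (idxLt (n := n)) := fun _ _ => by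
  unfold idxLt; infer_instance

/-- The integer `c_{ab,ij} = δ_{ai} − δ_{aj} − δ_{bi} + δ_{bj}`. -/
def cc {n : ℕ} (x y : Idx n) : ℤ :=
  (if x.1.1 = y.1.1 then 1 else 0) - (if x.1.1 = y.1.2 then 1 else 0)
    - (if x.1.2 = y.1.1 then 1 else 0) + (if x.1.2 = y.1.2 then 1 else 0)

variable (n : ℕ) (k : Type*) [CommRing k]

/-- The basis element `e_x` of the free module `L = (sl_{n+1}^+)_q`. -/
noncomputable def bas (x : Idx n) : Idx n →₀ k := Finsupp.single x 1

/-- The value `δ_{bi} e_{aj} − δ_{ja} e_{ib}` of the classical commutator of matrix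
units, as an element of the free module. -/
noncomputable def qcomm (x y : Idx n) : Idx n →₀ k :=
  (if h : x.1.2 = y.1.1 then
      Finsupp.single ⟨(x.1.1, y.1.2), (x.2.trans_eq h).trans y.2⟩ (1 : k)
    else 0)
  - (if h : y.1.2 = x.1.1 then
      Finsupp.single ⟨(y.1.1, x.1.2), (y.2.trans_eq h).trans x.2⟩ (1 : k)
    else 0)

variable (q : kˣ)

/-- The `q`-bracket `[e_x, e_y]_q` on basis elements. -/
noncomputable def br (x y : Idx n) : Idx n →₀ k :=
  if idxLt x y then qcomm n k x y
  else if x = y then 0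
  else (-((q ^ cc y x : kˣ) : k)) • qcomm n k y x

/-- The scalar `q(x,y)`. -/
noncomputable def qs (x y : Idx n) : k :=
  if idxLt x y then ((q ^ cc x y : kˣ) : k)
  else if x = y then 1
  else ((q ^ (-cc y x) : kˣ) : k)

/-- The `k`-bilinear extension of the `q`-bracket to `L = (sl_{n+1}^+)_q`. -/
noncomputable def brL : (Idx n →₀ k) →ₗ[k] (Idx n →₀ k) →ₗ[k] (Idx n →₀ k) :=
  Finsupp.lsum k fun x =>
    LinearMap.toSpanSingleton k ((Idx n →₀ k) →ₗ[k] (Idx n →₀ k))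
      (Finsupp.lsum k fun y =>
        LinearMap.toSpanSingleton k (Idx n →₀ k) (br n k q x y))

lemma brL_bas {n : ℕ} {k : Type*} [CommRing k] (q : kˣ) (x y : Idx n) :
    brL n k q (bas n k x) (bas n k y) = br n k q x y := by
  simp [brL, bas]

/-- If `e_{ab} > e_{ij} > e_{uv}` then the iterated `q`-bracket
`[[e_{uv}, e_{ab}]_q, e_{ij}]_q` vanishes in `L = (sl_{n+1}^+)_q`. -/
theorem stmt2 {n : ℕ} (hn : 1 ≤ n) {k : Type*} [CommRing k] (q : kˣ)
    (uv ij ab : Idx n) (h₁ : idxLt ij ab) (h₂ : idxLt uv ij) :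
    brL n k q (brL n k q (bas n k uv) (bas n k ab)) (bas n k ij) = 0 := by
  obtain ⟨⟨u, v⟩, huv⟩ := uv
  obtain ⟨⟨i, j⟩, hij⟩ := ij
  obtain ⟨⟨a, b⟩, hab⟩ := ab
  simp only [idxLt] at h₁ h₂
  have h13 : idxLt (n := n) ⟨(u, v), huv⟩ ⟨(a, b), hab⟩ := by
    simp only [idxLt]; omega
  rw [brL_bas]
  rw [br, if_pos h13]
  rw [qcomm]
  by_cases hvb : (b : Fin (n + 1)) = u
  · exfalso
    have : (b : ℕ) = (u : ℕ) := congrArg Fin.val hvb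
    have h1 := huv; have h2 := hij; have h3 := hab
    simp only [Fin.lt_def] at h1 h2 h3
    omega
  · rw [dif_neg hvb, sub_zero]
    by_cases hva : (v : Fin (n + 1)) = a
    · rw [dif_pos hva]
      have hub : (u : Fin (n + 1)) < b := (huv.trans_eq hva).trans hab
      rw [show Finsupp.single (⟨(u, b), hub⟩ : Idx n) (1 : k)
            = bas n k ⟨(u, b), hub⟩ from rfl]
      rw [brL_bas]
      have hva' : (v : ℕ) = (a : ℕ) := congrArg Fin.val hva
      have h1 := huv; have h2 := hij; have h3 := hab
      simp only [Fin.lt_def] at h1 h2 h3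
      have hbi : ¬ ((b : Fin (n+1)) = i) := by
        intro h; have := congrArg Fin.val h; omega
      have hju : ¬ ((j : Fin (n+1)) = u) := by
        intro h; have := congrArg Fin.val h; omega
      rw [br]
      split_ifs with hlt heq
      · rw [qcomm]
        simp only [dif_neg hbi, dif_neg hju, sub_zero]
      · rfl
      · rw [qcomm]
        simp only [dif_neg hju, dif_neg hbi, sub_zero, smul_zero]
    · rw [dif_neg hva]
      simp
end

section
/- (Antisymmetry axiom [,]∘⟨,⟩ = 0 for (sl_{n+1}^+)_q.) For all indices 1 ≤ a < i < b < j ≤ n+1, the q-bracket [e_{ib}, e_{aj}]_q equals 0 in L = (sl_{n+1}^+)_q; consequently the composite of the pseudobracket ⟨,⟩ (given on basis pairs e_{ab} < e_{ij} by ⟨e_{ab}, e_{ij}⟩ = (q − q^{−1}) e_{ib} ⊗ e_{aj} if a < i < b < j and 0 otherwise) with the bracket [,]_q is the zero map. -/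
/-!
For `a < i < b < j` the matrix units `e_{ib}` and `e_{aj}` commute, since `b ≠ a` and `j ≠ i`;
the `q`-bracket of two basis elements is a scalar multiple of their commutator, so it vanishes.
Every value of the pseudobracket on basis elements is a multiple of `e_{ib} ⊗ e_{aj}` for such
indices, and bilinearity extends the vanishing to all of `L ⊗ L`.
-/

open Finsupp TensorProduct

variable (n : ℕ) (k : Type*) [CommRing k]

variable (q : kˣ)

/-- Helper instance: the (canonical) zero of a tensor product, extracted from its
additive monoid structure.  This is definitionally the usual zero; it is only needed
to help elaboration. -/
noncomputable instance tensorZero {R : Type*} [CommRing R] {M N : Type*}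
    [AddCommMonoid M] [AddCommMonoid N] [Module R M] [Module R N] :
    Zero (M ⊗[R] N) :=
  (inferInstance : AddCommMonoid (M ⊗[R] N)).toZero

/-- The value of the pseudobracket `⟨e_{ab}, e_{ij}⟩` for `e_{ab} < e_{ij}`:
`(q − q⁻¹) e_{ib} ⊗ e_{aj}` if `a < i < b` and `i < b < j`, and `0` otherwise. -/
noncomputable def pbv (x y : Idx n) : (Idx n →₀ k) ⊗[k] (Idx n →₀ k) :=
  if h : x.1.1 < y.1.1 ∧ y.1.1 < x.1.2 ∧ x.1.2 < y.1.2 then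
    ((q : k) - ((q⁻¹ : kˣ) : k)) •
      (Finsupp.single (⟨(y.1.1, x.1.2), h.2.1⟩ : Idx n) (1 : k) ⊗ₜ[k]
        Finsupp.single (⟨(x.1.1, y.1.2), (h.1.trans h.2.1).trans h.2.2⟩ : Idx n) (1 : k))
  else 0

/-- The pseudobracket `⟨x, y⟩` on basis elements. -/
noncomputable def pb (x y : Idx n) : (Idx n →₀ k) ⊗[k] (Idx n →₀ k) :=
  if idxLt x y then pbv n k q x y
  else if x = y then 0
  else (-((q ^ (-cc y x) : kˣ) : k)) • pbv n k q y x

/-- The `k`-bilinear extension of the pseudobracket. -/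
noncomputable def pbL :
    (Idx n →₀ k) →ₗ[k] (Idx n →₀ k) →ₗ[k] ((Idx n →₀ k) ⊗[k] (Idx n →₀ k)) :=
  Finsupp.lsum k fun x =>
    LinearMap.toSpanSingleton k
      ((Idx n →₀ k) →ₗ[k] ((Idx n →₀ k) ⊗[k] (Idx n →₀ k)))
      (Finsupp.lsum k fun y =>
        LinearMap.toSpanSingleton k ((Idx n →₀ k) ⊗[k] (Idx n →₀ k)) (pb n k q x y))

section

variable {n : ℕ} {k : Type*} [CommRing k] (q : kˣ)

lemma qcomm_eq_zero {x y : Idx n} (h₁ : x.1.2 ≠ y.1.1) (h₂ : y.1.2 ≠ x.1.1) :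
    qcomm n k x y = 0 := by
  simp [qcomm, h₁, h₂]

lemma br_eq_zero {x y : Idx n} (h₁ : x.1.2 ≠ y.1.1) (h₂ : y.1.2 ≠ x.1.1) :
    br n k q x y = 0 := by
  simp [br, qcomm_eq_zero h₁ h₂, qcomm_eq_zero h₂ h₁]

lemma br_nested_eq_zero {a i b j : Fin (n + 1)} (hai : a < i) (hib : i < b) (hbj : b < j) :
    br n k q ⟨(i, b), hib⟩ ⟨(a, j), (hai.trans hib).trans hbj⟩ = 0 :=
  br_eq_zero q (hai.trans hib).ne' (hib.trans hbj).ne'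

lemma brL_bas_bas (x y : Idx n) : brL n k q (bas n k x) (bas n k y) = br n k q x y := by
  simp [brL, bas]

lemma pbL_bas_bas (x y : Idx n) : pbL n k q (bas n k x) (bas n k y) = pb n k q x y := by
  simp [pbL, bas]

lemma lift_brL_pbv (x y : Idx n) : lift (brL n k q) (pbv n k q x y) = 0 := by
  unfold pbv
  split_ifs with h
  · rw [map_smul, lift.tmul]
    change _ • brL n k q (bas n k _) (bas n k _) = 0
    rw [brL_bas_bas, br_nested_eq_zero q h.1 h.2.1 h.2.2, smul_zero]
  · exact map_zero _

lemma lift_brL_pb (x y : Idx n) : lift (brL n k q) (pb n k q x y) = 0 := by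
  unfold pb
  split_ifs
  · exact lift_brL_pbv q x y
  · exact map_zero _
  · rw [map_smul, lift_brL_pbv, smul_zero]

end

theorem stmt9_general {n : ℕ} {k : Type*} [CommRing k] (q : kˣ) :
    (∀ a i b j : Fin (n + 1), (hai : a < i) → (hib : i < b) → (hbj : b < j) →
      brL n k q (bas n k ⟨(i, b), hib⟩)
        (bas n k ⟨(a, j), (hai.trans hib).trans hbj⟩) = 0) ∧
    (TensorProduct.lift (brL n k q)) ∘ₗ (TensorProduct.lift (pbL n k q)) = 0 := by
  refine ⟨fun a i b j hai hib hbj => ?_, ?_⟩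
  · rw [brL_bas_bas, br_nested_eq_zero q hai hib hbj]
  · refine TensorProduct.ext (Finsupp.lhom_ext' fun x => LinearMap.ext_ring
      (Finsupp.lhom_ext' fun y => LinearMap.ext_ring ?_))
    show lift (brL n k q) (pbL n k q (bas n k x) (bas n k y)) = 0
    rw [pbL_bas_bas, lift_brL_pb]

/-- Antisymmetry axiom `[,]∘⟨,⟩ = 0` for `(sl_{n+1}^+)_q`: for all indices
`a < i < b < j`, the `q`-bracket `[e_{ib}, e_{aj}]_q` vanishes; consequently the
composite of the pseudobracket with the `q`-bracket is the zero map. -/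
theorem stmt9 {n : ℕ} (hn : 1 ≤ n) {k : Type*} [CommRing k] (q : kˣ) :
    (∀ a i b j : Fin (n + 1), (hai : a < i) → (hib : i < b) → (hbj : b < j) →
      brL n k q (bas n k ⟨(i, b), hib⟩)
        (bas n k ⟨(a, j), (hai.trans hib).trans hbj⟩) = 0) ∧
    (TensorProduct.lift (brL n k q)) ∘ₗ (TensorProduct.lift (pbL n k q)) = 0 :=
  stmt9_general q
end

section
/- With the notation of the tensor construction below, the following are equivalent: (i) for every λ ∈ k, R(λ) ∘ R'(λ) = id and R'(λ) ∘ R(λ) = id on L̃ ⊗ L̃; (ii) β ∘ S = −β as maps L ⊗ L → L. -/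
open TensorProduct

variable (k : Type*) [CommRing k] (M : Type*) [AddCommGroup M] [Module k M]

/-- The distinguished element `e = (0,1)` of `M̃ = M ⊕ k`. -/
def ee : M × k := (0, 1)

/-- `R(λ) : M̃⊗M̃ → M̃⊗M̃`, `R(λ)(u⊗v) = S̃(u⊗v) + ι β(pu ⊗ pv) ⊗ λe`, built from the
extension `St` of the presymmetry and a bracket `β`. -/
noncomputable def Rmap (St : ((M × k) ⊗[k] (M × k)) →ₗ[k] ((M × k) ⊗[k] (M × k)))
    (β : (M ⊗[k] M) →ₗ[k] M) (lam : k) :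
    ((M × k) ⊗[k] (M × k)) →ₗ[k] ((M × k) ⊗[k] (M × k)) :=
  St + ((TensorProduct.mk k (M × k) (M × k)).flip (lam • ee k M)).comp
    ((LinearMap.inl k M k).comp
      (β.comp (TensorProduct.map (LinearMap.fst k M k) (LinearMap.fst k M k))))

/-- `R'(λ) : M̃⊗M̃ → M̃⊗M̃`, `R'(λ)(u⊗v) = S̃(u⊗v) + λe ⊗ ι β(pu ⊗ pv)`. -/
noncomputable def Rmap' (St : ((M × k) ⊗[k] (M × k)) →ₗ[k] ((M × k) ⊗[k] (M × k)))
    (β : (M ⊗[k] M) →ₗ[k] M) (lam : k) :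
    ((M × k) ⊗[k] (M × k)) →ₗ[k] ((M × k) ⊗[k] (M × k)) :=
  St + ((TensorProduct.mk k (M × k) (M × k)) (lam • ee k M)).comp
    ((LinearMap.inl k M k).comp
      (β.comp (TensorProduct.map (LinearMap.fst k M k) (LinearMap.fst k M k))))

/-- `f ⊗ 1` acting on the first two factors of `(M⊗M)⊗M`. -/
noncomputable def tensorOne (f : (M ⊗[k] M) →ₗ[k] (M ⊗[k] M)) :
    ((M ⊗[k] M) ⊗[k] M) →ₗ[k] ((M ⊗[k] M) ⊗[k] M) :=
  TensorProduct.map f LinearMap.id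

/-- `1 ⊗ f` acting on the last two factors of `(M⊗M)⊗M`. -/
noncomputable def oneTensor (f : (M ⊗[k] M) →ₗ[k] (M ⊗[k] M)) :
    ((M ⊗[k] M) ⊗[k] M) →ₗ[k] ((M ⊗[k] M) ⊗[k] M) :=
  (TensorProduct.assoc k M M M).symm.toLinearMap ∘ₗ
    (TensorProduct.map LinearMap.id f) ∘ₗ (TensorProduct.assoc k M M M).toLinearMap

/-- `β ⊗ 1 : (M⊗M)⊗M → M⊗M`. -/
noncomputable def betaOne (β : (M ⊗[k] M) →ₗ[k] M) :
    ((M ⊗[k] M) ⊗[k] M) →ₗ[k] (M ⊗[k] M) :=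
  TensorProduct.map β LinearMap.id

/-- `1 ⊗ β : (M⊗M)⊗M → M⊗M` (after reassociating). -/
noncomputable def oneBeta (β : (M ⊗[k] M) →ₗ[k] M) :
    ((M ⊗[k] M) ⊗[k] M) →ₗ[k] (M ⊗[k] M) :=
  (TensorProduct.map LinearMap.id β) ∘ₗ (TensorProduct.assoc k M M M).toLinearMap

/-- `ι ⊗ ι ⊗ ι : (M⊗M)⊗M → (M̃⊗M̃)⊗M̃`. -/
noncomputable def iii : ((M ⊗[k] M) ⊗[k] M) →ₗ[k] (((M × k) ⊗[k] (M × k)) ⊗[k] (M × k)) :=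
  TensorProduct.map (TensorProduct.map (LinearMap.inl k M k) (LinearMap.inl k M k))
    (LinearMap.inl k M k)

/- Every tensor of `M̃ ⊗ M̃` is a combination of `ιx ⊗ ιy`, `ιx ⊗ e`, `e ⊗ ιx` and `e ⊗ e`. On the
last three, `R(λ)` and `R'(λ)` act as the flip, and on the first one, as `S` followed by a
correction term. Since `S` is involutive, composing the two maps sends `ιx ⊗ ιy` to
`ιx ⊗ ιy` plus `λ ι(β(S(x ⊗ y)) + β(x ⊗ y)) ⊗ e` (or plus the same term with its two factors
swapped). So the composites are the identity exactly when `λ (β ∘ S + β) = 0`. -/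

theorem Function.Involutive.of_apply_single_tmul_single {k I : Type*} [CommRing k]
    (q : I → I → k) (hq : ∀ i j, q i j * q j i = 1)
    (S : ((I →₀ k) ⊗[k] (I →₀ k)) →ₗ[k] ((I →₀ k) ⊗[k] (I →₀ k)))
    (hS : ∀ i j : I, S (Finsupp.single i 1 ⊗ₜ[k] Finsupp.single j 1)
        = q i j • (Finsupp.single j (1 : k) ⊗ₜ[k] Finsupp.single i (1 : k))) :
    Function.Involutive S := by
  suffices S ∘ₗ S = LinearMap.id from LinearMap.congr_fun this
  refine (Finsupp.basisSingleOne.tensorProduct Finsupp.basisSingleOne).ext fun ⟨i, j⟩ => ?_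
  simp only [Module.Basis.tensorProduct_apply, Finsupp.coe_basisSingleOne, LinearMap.comp_apply,
    hS, map_smul, smul_smul, hq, one_smul, LinearMap.id_apply]

section UnitalExtension

variable {k M}

local notation "ι" => LinearMap.inl k M k

structure IsUnitalExtension (S : (M ⊗[k] M) →ₗ[k] (M ⊗[k] M))
    (St : ((M × k) ⊗[k] (M × k)) →ₗ[k] ((M × k) ⊗[k] (M × k))) : Prop where
  inl_tmul_inl : ∀ x y : M, St (ι x ⊗ₜ ι y) = TensorProduct.map ι ι (S (x ⊗ₜ y))
  inl_tmul_ee : ∀ x : M, St (ι x ⊗ₜ ee k M) = ee k M ⊗ₜ ι x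
  ee_tmul_inl : ∀ x : M, St (ee k M ⊗ₜ ι x) = ι x ⊗ₜ ee k M
  ee_tmul_ee : St (ee k M ⊗ₜ ee k M) = ee k M ⊗ₜ ee k M

theorem prod_eq_inl_add_smul_ee (u : M × k) : u = ι u.1 + u.2 • ee k M := by
  simp [ee]

theorem tensorProduct_ext_inl_ee {N : Type*} [AddCommGroup N] [Module k N]
    {f g : ((M × k) ⊗[k] (M × k)) →ₗ[k] N}
    (h₁ : ∀ x y : M, f (ι x ⊗ₜ ι y) = g (ι x ⊗ₜ ι y))
    (h₂ : ∀ x : M, f (ι x ⊗ₜ ee k M) = g (ι x ⊗ₜ ee k M))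
    (h₃ : ∀ x : M, f (ee k M ⊗ₜ ι x) = g (ee k M ⊗ₜ ι x))
    (h₄ : f (ee k M ⊗ₜ ee k M) = g (ee k M ⊗ₜ ee k M)) : f = g := by
  refine TensorProduct.ext' fun u v => ?_
  rw [prod_eq_inl_add_smul_ee u, prod_eq_inl_add_smul_ee v]
  simp only [add_tmul, tmul_add, smul_tmul, tmul_smul, map_add, map_smul, h₁, h₂, h₃, h₄]

theorem map_fst_map_inl (t : M ⊗[k] M) :
    TensorProduct.map (LinearMap.fst k M k) (LinearMap.fst k M k) (TensorProduct.map ι ι t)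
      = t := by
  rw [← LinearMap.comp_apply, ← TensorProduct.map_comp, LinearMap.fst_comp_inl,
    TensorProduct.map_id, LinearMap.id_apply]

theorem inl_tmul_ee_injective : Function.Injective fun z : M => ι z ⊗ₜ[k] ee k M := by
  refine Function.LeftInverse.injective (g := TensorProduct.rid k M ∘
    TensorProduct.map (LinearMap.fst k M k) (LinearMap.snd k M k)) fun z => ?_
  simp [ee]

theorem ee_tmul_inl_injective : Function.Injective fun z : M => ee k M ⊗ₜ[k] ι z := by
  refine Function.LeftInverse.injective (g := TensorProduct.lid k M ∘
    TensorProduct.map (LinearMap.snd k M k) (LinearMap.fst k M k)) fun z => ?_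
  simp [ee]

variable {S : (M ⊗[k] M) →ₗ[k] (M ⊗[k] M)}
  {St : ((M × k) ⊗[k] (M × k)) →ₗ[k] ((M × k) ⊗[k] (M × k))}
  (β : (M ⊗[k] M) →ₗ[k] M) (lam : k)

theorem Rmap_apply (w : (M × k) ⊗[k] (M × k)) :
    Rmap k M St β lam w = St w +
      ι (β (TensorProduct.map (LinearMap.fst k M k) (LinearMap.fst k M k) w)) ⊗ₜ (lam • ee k M) :=
  rfl

theorem Rmap'_apply (w : (M × k) ⊗[k] (M × k)) :
    Rmap' k M St β lam w = St w +
      (lam • ee k M) ⊗ₜ ι (β (TensorProduct.map (LinearMap.fst k M k) (LinearMap.fst k M k) w)) :=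
  rfl

namespace IsUnitalExtension

theorem apply_map_inl_inl (h : IsUnitalExtension S St) (t : M ⊗[k] M) :
    St (TensorProduct.map ι ι t) = TensorProduct.map ι ι (S t) := by
  have : St ∘ₗ TensorProduct.map ι ι = TensorProduct.map ι ι ∘ₗ S :=
    TensorProduct.ext' h.inl_tmul_inl
  exact LinearMap.congr_fun this t

theorem Rmap_apply_map_inl_inl (h : IsUnitalExtension S St) (t : M ⊗[k] M) :
    Rmap k M St β lam (TensorProduct.map ι ι t)
      = TensorProduct.map ι ι (S t) + lam • (ι (β t) ⊗ₜ ee k M) := by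
  simp [Rmap, h.apply_map_inl_inl, map_fst_map_inl]

theorem Rmap'_apply_map_inl_inl (h : IsUnitalExtension S St) (t : M ⊗[k] M) :
    Rmap' k M St β lam (TensorProduct.map ι ι t)
      = TensorProduct.map ι ι (S t) + lam • (ee k M ⊗ₜ ι (β t)) := by
  simp [Rmap', h.apply_map_inl_inl, map_fst_map_inl, smul_tmul']

theorem Rmap_apply_inl_tmul_inl (h : IsUnitalExtension S St) (x y : M) :
    Rmap k M St β lam (ι x ⊗ₜ ι y)
      = TensorProduct.map ι ι (S (x ⊗ₜ y)) + lam • (ι (β (x ⊗ₜ y)) ⊗ₜ ee k M) :=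
  h.Rmap_apply_map_inl_inl β lam (x ⊗ₜ y)

theorem Rmap'_apply_inl_tmul_inl (h : IsUnitalExtension S St) (x y : M) :
    Rmap' k M St β lam (ι x ⊗ₜ ι y)
      = TensorProduct.map ι ι (S (x ⊗ₜ y)) + lam • (ee k M ⊗ₜ ι (β (x ⊗ₜ y))) :=
  h.Rmap'_apply_map_inl_inl β lam (x ⊗ₜ y)

theorem Rmap_apply_inl_tmul_ee (h : IsUnitalExtension S St) (x : M) :
    Rmap k M St β lam (ι x ⊗ₜ ee k M) = ee k M ⊗ₜ ι x := by
  rw [Rmap_apply, h.inl_tmul_ee]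
  simp [ee, Prod.mk_zero_zero]

theorem Rmap_apply_ee_tmul_inl (h : IsUnitalExtension S St) (x : M) :
    Rmap k M St β lam (ee k M ⊗ₜ ι x) = ι x ⊗ₜ ee k M := by
  rw [Rmap_apply, h.ee_tmul_inl]
  simp [ee, Prod.mk_zero_zero]

theorem Rmap_apply_ee_tmul_ee (h : IsUnitalExtension S St) :
    Rmap k M St β lam (ee k M ⊗ₜ ee k M) = ee k M ⊗ₜ ee k M := by
  rw [Rmap_apply, h.ee_tmul_ee]
  simp [ee, Prod.mk_zero_zero]

theorem Rmap'_apply_inl_tmul_ee (h : IsUnitalExtension S St) (x : M) :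
    Rmap' k M St β lam (ι x ⊗ₜ ee k M) = ee k M ⊗ₜ ι x := by
  rw [Rmap'_apply, h.inl_tmul_ee]
  simp [ee, Prod.mk_zero_zero]

theorem Rmap'_apply_ee_tmul_inl (h : IsUnitalExtension S St) (x : M) :
    Rmap' k M St β lam (ee k M ⊗ₜ ι x) = ι x ⊗ₜ ee k M := by
  rw [Rmap'_apply, h.ee_tmul_inl]
  simp [ee, Prod.mk_zero_zero]

theorem Rmap'_apply_ee_tmul_ee (h : IsUnitalExtension S St) :
    Rmap' k M St β lam (ee k M ⊗ₜ ee k M) = ee k M ⊗ₜ ee k M := by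
  rw [Rmap'_apply, h.ee_tmul_ee]
  simp [ee, Prod.mk_zero_zero]

theorem Rmap_comp_Rmap'_apply_inl_tmul_inl (h : IsUnitalExtension S St) (hS : Function.Involutive S)
    (x y : M) :
    (Rmap k M St β lam ∘ₗ Rmap' k M St β lam) (ι x ⊗ₜ ι y)
      = ι x ⊗ₜ ι y + ι ((lam • (β ∘ₗ S + β)) (x ⊗ₜ y)) ⊗ₜ ee k M := by
  simp only [LinearMap.comp_apply, h.Rmap'_apply_inl_tmul_inl, map_add, map_smul,
    h.Rmap_apply_map_inl_inl, h.Rmap_apply_ee_tmul_inl, hS (x ⊗ₜ y), TensorProduct.map_tmul,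
    LinearMap.smul_apply, LinearMap.add_apply, smul_add, add_tmul, ← smul_tmul']
  abel

theorem Rmap'_comp_Rmap_apply_inl_tmul_inl (h : IsUnitalExtension S St) (hS : Function.Involutive S)
    (x y : M) :
    (Rmap' k M St β lam ∘ₗ Rmap k M St β lam) (ι x ⊗ₜ ι y)
      = ι x ⊗ₜ ι y + ee k M ⊗ₜ ι ((lam • (β ∘ₗ S + β)) (x ⊗ₜ y)) := by
  simp only [LinearMap.comp_apply, h.Rmap_apply_inl_tmul_inl, map_add, map_smul,
    h.Rmap'_apply_map_inl_inl, h.Rmap'_apply_inl_tmul_ee, hS (x ⊗ₜ y), TensorProduct.map_tmul,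
    LinearMap.smul_apply, LinearMap.add_apply, smul_add, tmul_add, tmul_smul]
  abel

theorem Rmap_comp_Rmap'_eq_id_iff (h : IsUnitalExtension S St) (hS : Function.Involutive S) :
    Rmap k M St β lam ∘ₗ Rmap' k M St β lam = LinearMap.id ↔ lam • (β ∘ₗ S + β) = 0 := by
  constructor
  · intro hid
    refine TensorProduct.ext' fun x y => ?_
    apply inl_tmul_ee_injective (k := k)
    have := h.Rmap_comp_Rmap'_apply_inl_tmul_inl β lam hS x y
    rw [hid, LinearMap.id_apply, left_eq_add] at this
    simpa only [LinearMap.zero_apply, map_zero, zero_tmul] using this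
  · intro h0
    apply tensorProduct_ext_inl_ee
    · intro x y
      rw [h.Rmap_comp_Rmap'_apply_inl_tmul_inl β lam hS, h0]
      simp only [LinearMap.zero_apply, map_zero, zero_tmul, add_zero, LinearMap.id_apply]
    · intro x
      rw [LinearMap.comp_apply, h.Rmap'_apply_inl_tmul_ee, h.Rmap_apply_ee_tmul_inl,
          LinearMap.id_apply]
    · intro x
      rw [LinearMap.comp_apply, h.Rmap'_apply_ee_tmul_inl, h.Rmap_apply_inl_tmul_ee,
          LinearMap.id_apply]
    · rw [LinearMap.comp_apply, h.Rmap'_apply_ee_tmul_ee, h.Rmap_apply_ee_tmul_ee,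
          LinearMap.id_apply]

theorem Rmap'_comp_Rmap_eq_id_iff (h : IsUnitalExtension S St) (hS : Function.Involutive S) :
    Rmap' k M St β lam ∘ₗ Rmap k M St β lam = LinearMap.id ↔ lam • (β ∘ₗ S + β) = 0 := by
  constructor
  · intro hid
    refine TensorProduct.ext' fun x y => ?_
    apply ee_tmul_inl_injective (k := k)
    have := h.Rmap'_comp_Rmap_apply_inl_tmul_inl β lam hS x y
    rw [hid, LinearMap.id_apply, left_eq_add] at this
    simpa only [LinearMap.zero_apply, map_zero, tmul_zero] using this
  · intro h0
    apply tensorProduct_ext_inl_ee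
    · intro x y
      rw [h.Rmap'_comp_Rmap_apply_inl_tmul_inl β lam hS, h0]
      simp only [LinearMap.zero_apply, map_zero, tmul_zero, add_zero, LinearMap.id_apply]
    · intro x
      rw [LinearMap.comp_apply, h.Rmap_apply_inl_tmul_ee, h.Rmap'_apply_ee_tmul_inl,
          LinearMap.id_apply]
    · intro x
      rw [LinearMap.comp_apply, h.Rmap_apply_ee_tmul_inl, h.Rmap'_apply_inl_tmul_ee,
          LinearMap.id_apply]
    · rw [LinearMap.comp_apply, h.Rmap_apply_ee_tmul_ee, h.Rmap'_apply_ee_tmul_ee,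
          LinearMap.id_apply]

end IsUnitalExtension

end UnitalExtension

/-- `R(λ)R'(λ) = R'(λ)R(λ) = 1` for every `λ` iff the bracket `β` satisfies the
antisymmetry `β∘S = −β`. -/
theorem stmt10 {k : Type*} [CommRing k] {I : Type*}
    (q : I → I → kˣ) (hq : ∀ i j, q i j * q j i = 1)
    (S : ((I →₀ k) ⊗[k] (I →₀ k)) →ₗ[k] ((I →₀ k) ⊗[k] (I →₀ k)))
    (hS : ∀ i j : I, S (Finsupp.single i 1 ⊗ₜ[k] Finsupp.single j 1)
        = (q i j : k) • (Finsupp.single j (1 : k) ⊗ₜ[k] Finsupp.single i (1 : k)))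
    (β : ((I →₀ k) ⊗[k] (I →₀ k)) →ₗ[k] (I →₀ k))
    (St : (((I →₀ k) × k) ⊗[k] ((I →₀ k) × k)) →ₗ[k] (((I →₀ k) × k) ⊗[k] ((I →₀ k) × k)))
    (hSt1 : ∀ x y : I →₀ k,
      St ((LinearMap.inl k (I →₀ k) k x) ⊗ₜ[k] (LinearMap.inl k (I →₀ k) k y))
        = (TensorProduct.map (LinearMap.inl k (I →₀ k) k) (LinearMap.inl k (I →₀ k) k))
            (S (x ⊗ₜ[k] y)))
    (hSt2 : ∀ x : I →₀ k,
      St ((LinearMap.inl k (I →₀ k) k x) ⊗ₜ[k] ee k (I →₀ k))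
        = ee k (I →₀ k) ⊗ₜ[k] (LinearMap.inl k (I →₀ k) k x))
    (hSt3 : ∀ x : I →₀ k,
      St (ee k (I →₀ k) ⊗ₜ[k] (LinearMap.inl k (I →₀ k) k x))
        = (LinearMap.inl k (I →₀ k) k x) ⊗ₜ[k] ee k (I →₀ k))
    (hSt4 : St (ee k (I →₀ k) ⊗ₜ[k] ee k (I →₀ k)) = ee k (I →₀ k) ⊗ₜ[k] ee k (I →₀ k)) :
    (∀ lam : k,
        (Rmap k (I →₀ k) St β lam) ∘ₗ (Rmap' k (I →₀ k) St β lam) = LinearMap.id ∧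
        (Rmap' k (I →₀ k) St β lam) ∘ₗ (Rmap k (I →₀ k) St β lam) = LinearMap.id)
      ↔ β ∘ₗ S = -β := by
  have hS_inv : Function.Involutive S :=
    .of_apply_single_tmul_single (fun i j => (q i j : k))
      (fun i j => by rw [← Units.val_mul, hq, Units.val_one]) S hS
  have hSt : IsUnitalExtension S St := ⟨hSt1, hSt2, hSt3, hSt4⟩
  simp only [hSt.Rmap_comp_Rmap'_eq_id_iff β _ hS_inv, hSt.Rmap'_comp_Rmap_eq_id_iff β _ hS_inv,
    and_self]
  constructor
  · intro h
    refine LinearMap.ext fun t => eq_neg_of_add_eq_zero_left ?_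
    simpa using LinearMap.congr_fun (h 1) t
  · intro h lam
    rw [h]
    module
end
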